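/- arXiv:0810.1462 — 3 statements merged into one kernel-verified Lean document; each statement's English description precedes it below -/
import Mathlib

section
/- Let k be a field, B and K Lie algebras over k, and (D, ω) an admissible couple. Then the associated bracket [(κ₁, x₁), (κ₂, x₂)] := ([κ₁, κ₂]_K + D_{x₁}(κ₂) − D_{x₂}(κ₁) + ω(x₁, x₂), [x₁, x₂]_B) on the product vector space K × B is k-bilinear, alternating, and satisfies the Jacobi identity, hence makes K × B into a Lie algebra over k. Moreover, the second projection pr_B : K × B → B is a surjective Lie algebra homomorphism whose kernel is K × {0}, and the map κ ↦ (κ, 0) is an injective Lie algebra homomorphism from K onto this kernel. -/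
/-- The bracket on `K × B` associated to a couple `(D, ω)`. -/
def assocBracket {K B : Type*} [LieRing K] [LieRing B]
    (D : B → K → K) (ω : B → B → K) (p q : K × B) : K × B :=
  (⁅p.1, q.1⁆ + D p.2 q.1 - D q.2 p.1 + ω p.2 q.2, ⁅p.2, q.2⁆)

/-- For an admissible couple `(D, ω)` the associated bracket
on `K × B` is `k`-bilinear, alternating, and satisfies the Jacobi identity
(hence makes `K × B` a Lie algebra over `k`).  Moreover the second projection
is a surjective bracket-preserving map with kernel `K × {0}`, and `κ ↦ (κ, 0)`
is an injective bracket-preserving map onto this kernel. -/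
theorem statement_3 {k K B : Type*} [Field k]
    [LieRing K] [LieAlgebra k K] [LieRing B] [LieAlgebra k B]
    (D : B → K → K)
    (hD_add : ∀ (x y : B) (κ : K), D (x + y) κ = D x κ + D y κ)
    (hD_smul : ∀ (c : k) (x : B) (κ : K), D (c • x) κ = c • D x κ)
    (hD_add' : ∀ (x : B) (κ₁ κ₂ : K), D x (κ₁ + κ₂) = D x κ₁ + D x κ₂)
    (hD_smul' : ∀ (x : B) (c : k) (κ : K), D x (c • κ) = c • D x κ)
    (hD_leib : ∀ (x : B) (κ₁ κ₂ : K), D x ⁅κ₁, κ₂⁆ = ⁅D x κ₁, κ₂⁆ + ⁅κ₁, D x κ₂⁆)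
    (ω : B → B → K)
    (hω_alt : ∀ x : B, ω x x = 0)
    (hω_add : ∀ x y z : B, ω (x + y) z = ω x z + ω y z)
    (hω_smul : ∀ (c : k) (x y : B), ω (c • x) y = c • ω x y)
    (hω_add' : ∀ x y z : B, ω x (y + z) = ω x y + ω x z)
    (hω_smul' : ∀ (c : k) (x y : B), ω x (c • y) = c • ω x y)
    (hcurv : ∀ (x y : B) (κ : K), D x (D y κ) - D y (D x κ) - D ⁅x, y⁆ κ = ⁅ω x y, κ⁆)
    (hbianchi : ∀ x y z : B,
      (D x (ω y z) - ω ⁅x, y⁆ z) + (D y (ω z x) - ω ⁅y, z⁆ x) +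
        (D z (ω x y) - ω ⁅z, x⁆ y) = 0) :
    (∀ p q r : K × B,
      assocBracket D ω (p + q) r = assocBracket D ω p r + assocBracket D ω q r) ∧
    (∀ (c : k) (p q : K × B),
      assocBracket D ω (c • p) q = c • assocBracket D ω p q) ∧
    (∀ p q r : K × B,
      assocBracket D ω p (q + r) = assocBracket D ω p q + assocBracket D ω p r) ∧
    (∀ (c : k) (p q : K × B),
      assocBracket D ω p (c • q) = c • assocBracket D ω p q) ∧
    (∀ p : K × B, assocBracket D ω p p = 0) ∧
    (∀ p q r : K × B,
      assocBracket D ω (assocBracket D ω p q) r +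
        assocBracket D ω (assocBracket D ω q r) p +
        assocBracket D ω (assocBracket D ω r p) q = 0) ∧
    Function.Surjective (Prod.snd : K × B → B) ∧
    (∀ p q : K × B, (assocBracket D ω p q).2 = ⁅p.2, q.2⁆) ∧
    (∀ p : K × B, p.2 = 0 ↔ ∃ κ : K, p = (κ, 0)) ∧
    Function.Injective (fun κ : K => ((κ, 0) : K × B)) ∧
    (∀ κ₁ κ₂ : K, assocBracket D ω (κ₁, 0) (κ₂, 0) = (⁅κ₁, κ₂⁆, 0)) := by
  have hD_zero : ∀ κ : K, D 0 κ = 0 := by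
    intro κ
    have h := hD_smul 0 0 κ
    simpa using h
  have hD_neg' : ∀ (x : B) (κ : K), D x (-κ) = - D x κ := by
    intro x κ
    have h := hD_smul' x (-1 : k) κ
    simpa using h
  have hD_sub' : ∀ (x : B) (κ₁ κ₂ : K), D x (κ₁ - κ₂) = D x κ₁ - D x κ₂ := by
    intro x κ₁ κ₂
    rw [sub_eq_add_neg, hD_add', hD_neg', sub_eq_add_neg]
  refine ⟨?_, ?_, ?_, ?_, ?_, ?_, ?_, ?_, ?_, ?_, ?_⟩
  · intro p q r
    simp only [assocBracket, Prod.fst_add, Prod.snd_add, Prod.mk_add_mk, add_lie,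
      hD_add, hD_add', hω_add, Prod.mk.injEq]
    exact ⟨by abel, trivial⟩
  · intro c p q
    simp only [assocBracket, Prod.smul_fst, Prod.smul_snd, Prod.smul_mk, smul_lie,
      hD_smul, hD_smul', hω_smul, Prod.mk.injEq]
    exact ⟨by rw [smul_add, smul_sub, smul_add], trivial⟩
  · intro p q r
    simp only [assocBracket, Prod.fst_add, Prod.snd_add, Prod.mk_add_mk, lie_add,
      hD_add, hD_add', hω_add', Prod.mk.injEq]
    exact ⟨by abel, trivial⟩
  · intro c p q
    simp only [assocBracket, Prod.smul_fst, Prod.smul_snd, Prod.smul_mk, lie_smul,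
      hD_smul, hD_smul', hω_smul', Prod.mk.injEq]
    exact ⟨by rw [smul_add, smul_sub, smul_add], trivial⟩
  · intro p
    simp [assocBracket, hω_alt]
  · intro p q r
    obtain ⟨a, x⟩ := p
    obtain ⟨b, y⟩ := q
    obtain ⟨c, z⟩ := r
    have hb : -(((D x (ω y z) - ω ⁅x, y⁆ z) + (D y (ω z x) - ω ⁅y, z⁆ x) +
        (D z (ω x y) - ω ⁅z, x⁆ y))) = 0 := by rw [hbianchi]; simp
    simp only [assocBracket, Prod.mk_add_mk, Prod.mk_eq_zero]
    refine ⟨?_, by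
      rw [show ⁅⁅x,y⁆,z⁆ = -⁅z,⁅x,y⁆⁆ from (lie_skew ..).symm,
          show ⁅⁅y,z⁆,x⁆ = -⁅x,⁅y,z⁆⁆ from (lie_skew ..).symm,
          show ⁅⁅z,x⁆,y⁆ = -⁅y,⁅z,x⁆⁆ from (lie_skew ..).symm]
      linear_combination (norm := abel) -(lie_jacobi x y z)⟩
    simp only [add_lie, sub_lie, hD_add', hD_sub', hD_leib, ← hcurv]
    rw [← hb]
    try simp only [hD_sub']
    rw [show ⁅⁅a,b⁆,c⁆ = ⁅a,⁅b,c⁆⁆ - ⁅b,⁅a,c⁆⁆ from lie_lie a b c,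
        show ⁅⁅b,c⁆,a⁆ = ⁅b,⁅c,a⁆⁆ - ⁅c,⁅b,a⁆⁆ from lie_lie b c a,
        show ⁅⁅c,a⁆,b⁆ = ⁅c,⁅a,b⁆⁆ - ⁅a,⁅c,b⁆⁆ from lie_lie c a b,
        show ⁅b,⁅a,c⁆⁆ = -⁅b,⁅c,a⁆⁆ by rw [← lie_neg, lie_skew a c],
        show ⁅c,⁅b,a⁆⁆ = -⁅c,⁅a,b⁆⁆ by rw [← lie_neg, lie_skew b a],
        show ⁅a,⁅c,b⁆⁆ = -⁅a,⁅b,c⁆⁆ by rw [← lie_neg, lie_skew c b],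
        show ⁅D y a, c⁆ = -⁅c, D y a⁆ from (lie_skew ..).symm,
        show ⁅D z b, a⁆ = -⁅a, D z b⁆ from (lie_skew ..).symm,
        show ⁅D x c, b⁆ = -⁅b, D x c⁆ from (lie_skew ..).symm,
        show ⁅c,⁅a,b⁆⁆ = -⁅a,⁅b,c⁆⁆ - ⁅b,⁅c,a⁆⁆ from by
          have := lie_jacobi a b c; linear_combination (norm := abel) this]
    abel
  · exact fun b => ⟨(0, b), rfl⟩
  · intro p q; rfl
  · intro p
    constructor
    · intro h
      exact ⟨p.1, by ext <;> simp [h]⟩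
    · rintro ⟨κ, rfl⟩; rfl
  · intro a b h
    simpa using congrArg Prod.fst h
  · intro κ₁ κ₂
    simp [assocBracket, hD_zero, hω_alt]
end

section
/- Let k be a field, B and K Lie algebras over k, and let (D, ω) and (D', ω') be two admissible couples. Suppose there exists a Lie algebra isomorphism φ from (K × B, associated bracket of (D', ω')) to (K × B, associated bracket of (D, ω)) such that φ(κ, 0) = (κ, 0) for all κ ∈ K and pr_B ∘ φ = pr_B. Then there exists a k-linear map Δ : B → K such that for all x, y ∈ B and κ ∈ K: D'_x(κ) = D_x(κ) + [Δ(x), κ]_K and ω'(x, y) = ω(x, y) + D_x(Δ(y)) − D_y(Δ(x)) − Δ([x, y]_B) + [Δ(x), Δ(y)]_K. -/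
/-- If two admissible couples `(D, ω)` and `(D', ω')` give
equivalent extensions of `B` by `K`, i.e. there is a Lie algebra isomorphism
`φ` from `(K × B, bracket of (D', ω'))` to `(K × B, bracket of (D, ω))`
fixing `K` pointwise and commuting with the projections to `B`, then there is
a `k`-linear map `Δ : B → K` with `D'_x κ = D_x κ + ⁅Δ x, κ⁆` and
`ω' x y = ω x y + D_x (Δ y) - D_y (Δ x) - Δ ⁅x, y⁆ + ⁅Δ x, Δ y⁆`. -/
theorem statement_7 {k K B : Type*} [Field k]
    [LieRing K] [LieAlgebra k K] [LieRing B] [LieAlgebra k B]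
    (D : B → K → K)
    (hD_add : ∀ (x y : B) (κ : K), D (x + y) κ = D x κ + D y κ)
    (hD_smul : ∀ (c : k) (x : B) (κ : K), D (c • x) κ = c • D x κ)
    (hD_add' : ∀ (x : B) (κ₁ κ₂ : K), D x (κ₁ + κ₂) = D x κ₁ + D x κ₂)
    (hD_smul' : ∀ (x : B) (c : k) (κ : K), D x (c • κ) = c • D x κ)
    (hD_leib : ∀ (x : B) (κ₁ κ₂ : K), D x ⁅κ₁, κ₂⁆ = ⁅D x κ₁, κ₂⁆ + ⁅κ₁, D x κ₂⁆)
    (ω : B → B → K)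
    (hω_alt : ∀ x : B, ω x x = 0)
    (hω_add : ∀ x y z : B, ω (x + y) z = ω x z + ω y z)
    (hω_smul : ∀ (c : k) (x y : B), ω (c • x) y = c • ω x y)
    (hω_add' : ∀ x y z : B, ω x (y + z) = ω x y + ω x z)
    (hω_smul' : ∀ (c : k) (x y : B), ω x (c • y) = c • ω x y)
    (hcurv : ∀ (x y : B) (κ : K), D x (D y κ) - D y (D x κ) - D ⁅x, y⁆ κ = ⁅ω x y, κ⁆)
    (hbianchi : ∀ x y z : B,
      (D x (ω y z) - ω ⁅x, y⁆ z) + (D y (ω z x) - ω ⁅y, z⁆ x) +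
        (D z (ω x y) - ω ⁅z, x⁆ y) = 0)
    (D' : B → K → K)
    (hD'_add : ∀ (x y : B) (κ : K), D' (x + y) κ = D' x κ + D' y κ)
    (hD'_smul : ∀ (c : k) (x : B) (κ : K), D' (c • x) κ = c • D' x κ)
    (hD'_add' : ∀ (x : B) (κ₁ κ₂ : K), D' x (κ₁ + κ₂) = D' x κ₁ + D' x κ₂)
    (hD'_smul' : ∀ (x : B) (c : k) (κ : K), D' x (c • κ) = c • D' x κ)
    (hD'_leib : ∀ (x : B) (κ₁ κ₂ : K),
      D' x ⁅κ₁, κ₂⁆ = ⁅D' x κ₁, κ₂⁆ + ⁅κ₁, D' x κ₂⁆)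
    (ω' : B → B → K)
    (hω'_alt : ∀ x : B, ω' x x = 0)
    (hω'_add : ∀ x y z : B, ω' (x + y) z = ω' x z + ω' y z)
    (hω'_smul : ∀ (c : k) (x y : B), ω' (c • x) y = c • ω' x y)
    (hω'_add' : ∀ x y z : B, ω' x (y + z) = ω' x y + ω' x z)
    (hω'_smul' : ∀ (c : k) (x y : B), ω' x (c • y) = c • ω' x y)
    (hcurv' : ∀ (x y : B) (κ : K),
      D' x (D' y κ) - D' y (D' x κ) - D' ⁅x, y⁆ κ = ⁅ω' x y, κ⁆)
    (hbianchi' : ∀ x y z : B,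
      (D' x (ω' y z) - ω' ⁅x, y⁆ z) + (D' y (ω' z x) - ω' ⁅y, z⁆ x) +
        (D' z (ω' x y) - ω' ⁅z, x⁆ y) = 0)
    (φ : K × B → K × B)
    (hφ_bij : Function.Bijective φ)
    (hφ_add : ∀ p q : K × B, φ (p + q) = φ p + φ q)
    (hφ_smul : ∀ (c : k) (p : K × B), φ (c • p) = c • φ p)
    (hφ_br : ∀ p q : K × B,
      φ (assocBracket D' ω' p q) = assocBracket D ω (φ p) (φ q))
    (hφ_ker : ∀ κ : K, φ (κ, 0) = (κ, 0))
    (hφ_snd : ∀ p : K × B, (φ p).2 = p.2) :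
    ∃ Δ : B → K,
      (∀ x y : B, Δ (x + y) = Δ x + Δ y) ∧
      (∀ (c : k) (x : B), Δ (c • x) = c • Δ x) ∧
      (∀ (x : B) (κ : K), D' x κ = D x κ + ⁅Δ x, κ⁆) ∧
      (∀ x y : B,
        ω' x y = ω x y + D x (Δ y) - D y (Δ x) - Δ ⁅x, y⁆ + ⁅Δ x, Δ y⁆) := by
  set Δ : B → K := fun x => (φ (0, x)).1 with hΔ
  have hD0 : ∀ κ : K, D 0 κ = 0 := by
    intro κ
    have := hD_smul (0 : k) 0 κ
    simpa using this
  have hD'0 : ∀ κ : K, D' 0 κ = 0 := by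
    intro κ
    have := hD'_smul (0 : k) 0 κ
    simpa using this
  have hDz : ∀ x : B, D x (0 : K) = 0 := by
    intro x
    have := hD_smul' x (0 : k) 0
    simpa using this
  have hD'z : ∀ x : B, D' x (0 : K) = 0 := by
    intro x
    have := hD'_smul' x (0 : k) 0
    simpa using this
  have hω0 : ∀ x : B, ω x 0 = 0 := by
    intro x
    have := hω_smul' (0 : k) x 0
    simpa using this
  have hω'0 : ∀ x : B, ω' x 0 = 0 := by
    intro x
    have := hω'_smul' (0 : k) x 0
    simpa using this
  have hφ : ∀ (κ : K) (x : B), φ (κ, x) = (κ + Δ x, x) := by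
    intro κ x
    have h1 : φ (κ, x) = φ (κ, 0) + φ (0, x) := by
      rw [← hφ_add]; norm_num
    have h2 : φ (0, x) = (Δ x, x) := by
      have := hφ_snd (0, x)
      simp only [hΔ]
      exact Prod.ext rfl this
    rw [h1, hφ_ker, h2]
    simp [Prod.ext_iff]
  refine ⟨Δ, ?_, ?_, ?_, ?_⟩
  · intro x y
    have h : φ ((0 : K), x + y) = φ (0, x) + φ (0, y) := by
      rw [← hφ_add]; norm_num
    rw [hφ, hφ, hφ] at h
    have := congrArg Prod.fst h
    simpa using this
  · intro c x
    have h : φ ((0 : K), c • x) = c • φ (0, x) := by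
      rw [← hφ_smul]; norm_num
    rw [hφ, hφ] at h
    have := congrArg Prod.fst h
    simpa using this
  · intro x κ
    have h := hφ_br (0, x) (κ, 0)
    have h1 : assocBracket D' ω' ((0 : K), x) (κ, (0 : B)) = (D' x κ, 0) := by
      simp [assocBracket, hD'0, hD'z, hω'0]
    rw [h1, hφ_ker, hφ, hφ_ker] at h
    simp only [assocBracket, hDz, hD0, hω0, zero_add] at h
    have h2 := congrArg Prod.fst h
    simp only at h2
    rw [h2]
    abel
  · intro x y
    have h := hφ_br (0, x) (0, y)
    have h1 : assocBracket D' ω' ((0 : K), x) ((0 : K), y) = (ω' x y, ⁅x, y⁆) := by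
      simp [assocBracket, hD'z]
    rw [h1, hφ, hφ, hφ] at h
    simp only [assocBracket, zero_add] at h
    have h2 := congrArg Prod.fst h
    simp only at h2
    linear_combination (norm := abel) h2
end

section
/- Let L be a finite-dimensional real Lie algebra equipped with a norm. Let α : ℝ² → L be smooth (parameters (ε, t)), let β₀ : ℝ → L be smooth, and let Φ : ℝ³ → End_ℝ(L) be a smooth map (parameters (ε, t, s)) into linear endomorphisms of L such that Φ(ε, s, s) = id_L for all ε, s, and ∂/∂t Φ(ε, t, s)(v) = −[α(ε, t), Φ(ε, t, s)(v)]_L for all v ∈ L (so that, for each fixed ε, Φ(ε, ·, ·) is the two-parameter flow of the time-dependent inner derivation −ad_{α(ε, t)}). Define β : ℝ² → L by β(ε, t) := ∫₀ᵗ Φ(ε, t, s)(∂α/∂ε(ε, s)) ds + Φ(ε, t, 0)(β₀(ε)). Then β(ε, 0) = β₀(ε) and β solves the evolution equation: for all (ε, t), ∂α/∂ε(ε, t) − ∂β/∂t(ε, t) = [α(ε, t), β(ε, t)]_L. -/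
open scoped Topology
open Set

/-- (Integral formula for the solution of the evolution
equation.)  Let `L` be a finite-dimensional real Lie algebra equipped with a
norm (formalized as a finite-dimensional normed real vector space together
with a bilinear, alternating bracket satisfying the Jacobi/Leibniz identity).
Let `α : ℝ² → L` (parameters `(ε, t)`) and `β₀ : ℝ → L` be smooth, and let
`Φ : ℝ³ → End(L)` (parameters `(ε, t, s)`) be a smooth map into endomorphisms
of `L` with `Φ(ε, s, s) = id` and `∂/∂t Φ(ε, t, s) v = −⁅α(ε, t), Φ(ε, t, s) v⁆`
(the two-parameter flow of `−ad_{α(ε, t)}`).  Then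
`β(ε, t) := ∫₀ᵗ Φ(ε, t, s)(∂α/∂ε(ε, s)) ds + Φ(ε, t, 0)(β₀ ε)` satisfies
`β(ε, 0) = β₀ ε` and the evolution equation
`∂α/∂ε − ∂β/∂t = ⁅α, β⁆`. -/
theorem statement_13 {L : Type*}
    [NormedAddCommGroup L] [NormedSpace ℝ L] [FiniteDimensional ℝ L]
    (br : L →ₗ[ℝ] L →ₗ[ℝ] L)
    (hbr_alt : ∀ v : L, br v v = 0)
    (hbr_jacobi : ∀ u v w : L, br u (br v w) = br (br u v) w + br v (br u w))
    (α : ℝ → ℝ → L) (hα : ContDiff ℝ (⊤ : ℕ∞) (fun p : ℝ × ℝ => α p.1 p.2))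
    (β₀ : ℝ → L) (hβ₀ : ContDiff ℝ (⊤ : ℕ∞) β₀)
    (Φ : ℝ → ℝ → ℝ → L →L[ℝ] L)
    (hΦ : ContDiff ℝ (⊤ : ℕ∞) (fun p : ℝ × ℝ × ℝ => Φ p.1 p.2.1 p.2.2))
    (hΦ_id : ∀ ε s : ℝ, Φ ε s s = ContinuousLinearMap.id ℝ L)
    (hΦ_flow : ∀ (ε t s : ℝ) (v : L),
      deriv (fun τ => Φ ε τ s v) t = - br (α ε t) (Φ ε t s v))
    (β : ℝ → ℝ → L)
    (hβ_def : ∀ ε t : ℝ,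
      β ε t = (∫ s in (0:ℝ)..t, Φ ε t s (deriv (fun e => α e s) ε))
        + Φ ε t 0 (β₀ ε)) :
    (∀ ε : ℝ, β ε 0 = β₀ ε) ∧
    (∀ ε t : ℝ,
      deriv (fun e => α e t) ε - deriv (fun s => β ε s) t
        = br (α ε t) (β ε t)) := by
  classical
  -- the adjoint map as a continuous linear map (negated)
  set ad : L → (L →L[ℝ] L) := fun x => -(LinearMap.toContinuousLinearMap (br x)) with had_def
  have had_apply : ∀ x y : L, ad x y = - br x y := fun x y => rfl
  have had_cont : Continuous ad := by
    have : IsLinearMap ℝ ad := by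
      constructor
      · intro x y; ext v; simp [had_def, map_add]; abel
      · intro c x; ext v; simp [had_def, map_smul]
    exact (this.mk' ad).continuous_of_finiteDimensional
  have hαc : Continuous (fun p : ℝ × ℝ => α p.1 p.2) := hα.continuous
  -- differentiability of t ↦ Φ ε t s
  have hΦt : ∀ (ε s : ℝ), Differentiable ℝ (fun τ => Φ ε τ s) := by
    intro ε s
    have h1 : ContDiff ℝ (⊤ : ℕ∞) (fun τ : ℝ => ((ε, τ, s) : ℝ × ℝ × ℝ)) :=
      ContDiff.prodMk contDiff_const (contDiff_id.prodMk contDiff_const)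
    exact (hΦ.comp h1).differentiable (by simp)
  -- the flow equation as a HasDerivAt
  have hΦtv : ∀ (ε t s : ℝ) (v : L),
      HasDerivAt (fun τ => Φ ε τ s v) (ad (α ε t) (Φ ε t s v)) t := by
    intro ε t s v
    have hd : DifferentiableAt ℝ (fun τ => Φ ε τ s v) t := by
      have := ((ContinuousLinearMap.apply ℝ L v).differentiable.comp (hΦt ε s)) t
      exact this
    have := hd.hasDerivAt
    rwa [hΦ_flow ε t s v, ← had_apply] at this
  -- flow composition identity
  have key : ∀ (ε t s : ℝ), Φ ε t s = (Φ ε t 0).comp (Φ ε 0 s) := by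
    intro ε t s
    ext v
    set a : ℝ := -(|t| + 1) with ha_def
    set b : ℝ := |t| + 1 with hb_def
    have hb_pos : (0:ℝ) < |t| + 1 := by positivity
    set c : ℝ → ℝ := fun u => max a (min u b) with hc_def
    have hc_mem : ∀ u, c u ∈ Icc a b := by
      intro u
      constructor
      · exact le_max_left _ _
      · simp only [hc_def, max_le_iff, hb_def, ha_def]
        constructor
        · linarith
        · exact min_le_right _ _
    have hc_eq : ∀ u ∈ Icc a b, c u = u := by
      intro u hu
      simp only [hc_def]
      rw [min_eq_left hu.2, max_eq_right hu.1]
    -- uniform bound for the Lipschitz constant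
    have hcont_ad : Continuous fun u => ad (α ε u) :=
      had_cont.comp (hαc.comp (continuous_const.prodMk continuous_id))
    obtain ⟨C, hC⟩ := (isCompact_Icc (a := a) (b := b)).exists_bound_of_continuousOn
      hcont_ad.continuousOn
    set K : NNReal := ⟨max C 0, le_max_right _ _⟩ with hK_def
    set V : ℝ → L → L := fun u => ⇑(ad (α ε (c u))) with hV_def
    have hlip : ∀ u, LipschitzOnWith K (V u) univ := by
      intro u
      apply LipschitzWith.lipschitzOnWith
      refine (ad (α ε (c u))).lipschitz.weaken ?_
      have h1 : ‖ad (α ε (c u))‖ ≤ C := hC _ (hc_mem u)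
      exact NNReal.coe_le_coe.mp (by rw [coe_nnnorm]; exact le_trans h1 (le_max_left C 0))
    have h0mem : (0:ℝ) ∈ Ioo a b := by
      constructor <;> simp [ha_def, hb_def] <;> linarith
    have htmem : t ∈ Icc a b := by
      constructor
      · simp only [ha_def]; have := neg_abs_le t; linarith
      · simp only [hb_def]; have := le_abs_self t; linarith
    have heq := ODE_solution_unique_of_mem_Icc (v := V) (s := fun _ => (univ : Set L))
      (K := K) (f := fun τ => Φ ε τ s v) (g := fun τ => Φ ε τ 0 (Φ ε 0 s v))
      (fun u _ => hlip u) h0mem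
      (fun u _ => ((hΦtv ε u s v).continuousAt).continuousWithinAt)
      (fun u hu => by
        have := hΦtv ε u s v
        rwa [show ad (α ε u) (Φ ε u s v) = V u (Φ ε u s v) by
          rw [hV_def]; simp only []; rw [hc_eq u (Ioo_subset_Icc_self hu)]] at this)
      (fun _ _ => mem_univ _)
      (fun u _ => ((hΦtv ε u 0 (Φ ε 0 s v)).continuousAt).continuousWithinAt)
      (fun u hu => by
        have := hΦtv ε u 0 (Φ ε 0 s v)
        rwa [show ad (α ε u) (Φ ε u 0 (Φ ε 0 s v)) = V u (Φ ε u 0 (Φ ε 0 s v)) by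
          rw [hV_def]; simp only []; rw [hc_eq u (Ioo_subset_Icc_self hu)]] at this)
      (fun _ _ => mem_univ _)
      (by simp [hΦ_id])
    exact heq htmem
  -- the ε-partial derivative of α and its continuity
  set g : ℝ → ℝ → L := fun ε s => deriv (fun e => α e s) ε with hg_def
  have hpart : ∀ (ε s : ℝ), HasDerivAt (fun e => α e s)
      (fderiv ℝ (fun p : ℝ × ℝ => α p.1 p.2) (ε, s) (1, 0)) ε := by
    intro ε s
    have hF := (hα.differentiable (by simp) (ε, s)).hasFDerivAt
    have hl : HasDerivAt (fun e : ℝ => ((e, s) : ℝ × ℝ)) ((1 : ℝ), (0 : ℝ)) ε :=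
      (hasDerivAt_id ε).prodMk (hasDerivAt_const ε s)
    exact hF.comp_hasDerivAt ε hl
  have hg_eq : ∀ ε s, g ε s = fderiv ℝ (fun p : ℝ × ℝ => α p.1 p.2) (ε, s) (1, 0) :=
    fun ε s => (hpart ε s).deriv
  have hg_cont : ∀ ε, Continuous (g ε) := by
    intro ε
    have h1 : Continuous (fderiv ℝ (fun p : ℝ × ℝ => α p.1 p.2)) :=
      hα.continuous_fderiv (by simp)
    have h2 : Continuous fun s : ℝ =>
        fderiv ℝ (fun p : ℝ × ℝ => α p.1 p.2) (ε, s) (1, 0) :=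
      (h1.comp (continuous_const.prodMk continuous_id)).clm_apply continuous_const
    have : (g ε) = fun s => fderiv ℝ (fun p : ℝ × ℝ => α p.1 p.2) (ε, s) (1, 0) :=
      funext fun s => hg_eq ε s
    rw [this]; exact h2
  -- continuity of the integrand s ↦ Φ ε 0 s (g ε s)
  have hΦcont : Continuous (fun p : ℝ × ℝ × ℝ => Φ p.1 p.2.1 p.2.2) := hΦ.continuous
  have hint_cont : ∀ ε, Continuous fun s => Φ ε 0 s (g ε s) := by
    intro ε
    exact (hΦcont.comp ((continuous_const.prodMk
      (continuous_const.prodMk continuous_id)))).clm_apply (hg_cont ε)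
  -- rewrite β
  set c : ℝ → ℝ → L := fun ε τ => (∫ s in (0:ℝ)..τ, Φ ε 0 s (g ε s)) + β₀ ε with hc_def
  have hβ' : ∀ ε t, β ε t = Φ ε t 0 (c ε t) := by
    intro ε t
    rw [hβ_def, hc_def, map_add]
    congr 1
    rw [← ContinuousLinearMap.intervalIntegral_comp_comm _
      ((hint_cont ε).intervalIntegrable 0 t)]
    apply intervalIntegral.integral_congr
    intro s _
    show Φ ε t s (g ε s) = Φ ε t 0 (Φ ε 0 s (g ε s))
    rw [key ε t s]; rfl
  refine ⟨?_, ?_⟩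
  · intro ε
    rw [hβ_def, intervalIntegral.integral_same, hΦ_id]
    simp
  · intro ε t
    -- derivative of c
    have hc_deriv : HasDerivAt (c ε) (Φ ε 0 t (g ε t)) t := by
      rw [hc_def]
      exact (intervalIntegral.integral_hasDerivAt_right
        ((hint_cont ε).intervalIntegrable 0 t)
        ((hint_cont ε).stronglyMeasurableAtFilter _ _)
        (hint_cont ε).continuousAt).add_const _
    -- derivative of τ ↦ Φ ε τ 0
    have hU : HasDerivAt (fun τ => Φ ε τ 0) (deriv (fun τ => Φ ε τ 0) t) t :=
      ((hΦt ε 0) t).hasDerivAt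
    set D : L →L[ℝ] L := deriv (fun τ => Φ ε τ 0) t with hD_def
    have hDv : ∀ v : L, D v = ad (α ε t) (Φ ε t 0 v) := by
      intro v
      have h1 : HasDerivAt (fun τ => Φ ε τ 0 v) (D v + Φ ε t 0 0) t :=
        hU.clm_apply (hasDerivAt_const t v)
      rw [map_zero, add_zero] at h1
      exact h1.unique (hΦtv ε t 0 v)
    have hprod : HasDerivAt (fun τ => Φ ε τ 0 (c ε τ))
        (D (c ε t) + Φ ε t 0 (Φ ε 0 t (g ε t))) t := hU.clm_apply hc_deriv
    have hid : Φ ε t 0 (Φ ε 0 t (g ε t)) = g ε t := by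
      have : (Φ ε t 0).comp (Φ ε 0 t) = ContinuousLinearMap.id ℝ L := by
        rw [← key ε t t, hΦ_id]
      calc Φ ε t 0 (Φ ε 0 t (g ε t)) = ((Φ ε t 0).comp (Φ ε 0 t)) (g ε t) := rfl
        _ = g ε t := by rw [this]; rfl
    have hβfun : (fun τ => β ε τ) = fun τ => Φ ε τ 0 (c ε τ) := funext fun τ => hβ' ε τ
    have hβ_deriv : HasDerivAt (fun τ => β ε τ) (- br (α ε t) (β ε t) + g ε t) t := by
      rw [hβfun]
      have := hprod
      rwa [hid, hDv, had_apply, ← hβ' ε t] at this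
    have hdβ : deriv (fun s => β ε s) t = - br (α ε t) (β ε t) + g ε t := hβ_deriv.deriv
    rw [hdβ]
    show g ε t - (-(br (α ε t)) (β ε t) + g ε t) = (br (α ε t)) (β ε t)
    abel
end
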